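/- If H is an n×n symmetric positive definite matrix, B is an n×m matrix of full column rank with m ≥ 1, and C is an m×m symmetric positive semidefinite matrix, then the saddle-point matrix K = [[H, B], [Bᵀ, -C]] is indefinite: it has both positive and negative eigenvalues (specifically, n positive and m negative eigenvalues). -/

import Mathlib

/-!
On the `n`-dimensional subspace `{(x, 0)}` the quadratic form of `K` is `xᵀHx > 0`; on the
`m`-dimensional subspace `{(-H⁻¹By, y)}` it is `-yᵀ(C + BᵀH⁻¹B)y < 0`, the Schur complement
`C + BᵀH⁻¹B` being positive definite because `B` is injective. A subspace on which the form is
positive (negative) definite meets the span of the eigenvectors with nonpositive (nonnegative)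
eigenvalues trivially, so `K` has at least `n` positive and at least `m` negative eigenvalues; as
it has only `n + m` eigenvalues, both counts are exact.
-/

open Matrix

namespace Matrix

variable {α m n : Type*} [Fintype n]

theorem mulVec_injective_of_rank_eq_card {K : Type*} [Field K] {A : Matrix m n K}
    (h : A.rank = Fintype.card n) : Function.Injective A.mulVec := by
  have hrn := LinearMap.finrank_range_add_finrank_ker A.mulVecLin
  rwa [Module.finrank_fintype_fun_eq_card, ← rank, h, Nat.add_eq_left,
    Submodule.finrank_eq_zero, LinearMap.ker_eq_bot] at hrn

theorem sumElim_zero_dotProduct_fromBlocks_mulVec [Fintype m] [CommSemiring α] (A : Matrix m m α)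
    (B : Matrix m n α) (C : Matrix n m α) (D : Matrix n n α) (x : m → α) :
    (x ⊕ᵥ 0) ⬝ᵥ fromBlocks A B C D *ᵥ (x ⊕ᵥ 0) = x ⬝ᵥ A *ᵥ x := by
  simp [fromBlocks_mulVec, sumElim_dotProduct_sumElim]

theorem dotProduct_fromBlocks_mulVec_eq_schurComplement [Fintype m] [DecidableEq m] [CommRing α]
    [StarRing α] [TrivialStar α] {A : Matrix m m α} [Invertible A] (hA : A.IsHermitian)
    (B : Matrix m n α) (D : Matrix n n α) (y : n → α) :
    (-((A⁻¹ * B) *ᵥ y) ⊕ᵥ y) ⬝ᵥ fromBlocks A B Bᵀ D *ᵥ (-((A⁻¹ * B) *ᵥ y) ⊕ᵥ y) =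
      y ⬝ᵥ (D - Bᵀ * A⁻¹ * B) *ᵥ y := by
  have := schur_complement_eq₁₁ B D (-((A⁻¹ * B) *ᵥ y)) y hA
  simpa [star_trivial, conjTranspose_eq_transpose_of_trivial, dotProduct_mulVec] using this

section SaddlePoint

variable {ι κ : Type*} [Fintype ι] [Fintype κ] [DecidableEq ι] {H : Matrix ι ι ℝ}
  (B : Matrix ι κ ℝ) (C : Matrix κ κ ℝ)

theorem dotProduct_fromBlocks_mulVec_pos_of_posDef (hH : H.PosDef) {x : ι → ℝ} (hx : x ≠ 0) :
    0 < (fromRows 1 0 *ᵥ x) ⬝ᵥ fromBlocks H B Bᵀ (-C) *ᵥ (fromRows 1 0 *ᵥ x) := by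
  simpa [fromRows_mulVec, sumElim_zero_dotProduct_fromBlocks_mulVec] using
    hH.dotProduct_mulVec_pos hx

theorem dotProduct_fromBlocks_mulVec_neg_of_posDef [DecidableEq κ] (hH : H.PosDef)
    (hB : Function.Injective B.mulVec) (hC : C.PosSemidef) {y : κ → ℝ} (hy : y ≠ 0) :
    (fromRows (-(H⁻¹ * B)) 1 *ᵥ y) ⬝ᵥ fromBlocks H B Bᵀ (-C) *ᵥ (fromRows (-(H⁻¹ * B)) 1 *ᵥ y)
      < 0 := by
  have : Invertible H := hH.isUnit.invertible
  have hSchur : (C + Bᵀ * H⁻¹ * B).PosDef := by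
    simpa only [conjTranspose_eq_transpose_of_trivial] using
      PosDef.posSemidef_add hC (hH.inv.conjTranspose_mul_mul_same hB)
  rw [fromRows_mulVec, one_mulVec, neg_mulVec,
    dotProduct_fromBlocks_mulVec_eq_schurComplement hH.isHermitian, ← neg_add', neg_mulVec,
    dotProduct_neg, neg_lt_zero]
  simpa using hSchur.dotProduct_mulVec_pos hy

end SaddlePoint

end Matrix

namespace Matrix.IsHermitian

open Finset

variable {N : Type*} [Fintype N] [DecidableEq N] {A : Matrix N N ℝ} (hA : A.IsHermitian)

local notation "U" => (hA.eigenvectorUnitary : Matrix N N ℝ)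

theorem dotProduct_mulVec_eq_sum_eigenvalues (x : N → ℝ) :
    x ⬝ᵥ A *ᵥ x = ∑ i, hA.eigenvalues i * (star U *ᵥ x) i ^ 2 := by
  have hU : x ᵥ* U = star U *ᵥ x := by
    rw [star_eq_conjTranspose, conjTranspose_eq_transpose_of_trivial, mulVec_transpose]
  conv_lhs => rw [hA.spectral_theorem, Unitary.conjStarAlgAut_apply]
  rw [← mulVec_mulVec, ← mulVec_mulVec, dotProduct_mulVec, hU]
  simp only [dotProduct, mulVec_diagonal, Function.comp_apply, RCLike.ofReal_real_eq_id, id]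
  exact Finset.sum_congr rfl fun i _ => by ring

theorem finrank_le_card_filter_eigenvalues {E : Type*} [AddCommGroup E] [Module ℝ E]
    [FiniteDimensional ℝ E] (p : ℝ → Prop) [DecidablePred p] (f : E →ₗ[ℝ] N → ℝ)
    (hf : ∀ v, (∀ i, p (hA.eigenvalues i) → (star U *ᵥ f v) i = 0) → v = 0) :
    Module.finrank ℝ E ≤ #{i | p (hA.eigenvalues i)} := by
  let g : E →ₗ[ℝ] {i // p (hA.eigenvalues i)} → ℝ :=
    LinearMap.funLeft ℝ ℝ Subtype.val ∘ₗ (star U).mulVecLin ∘ₗ f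
  have hg : Function.Injective g := by
    rw [← LinearMap.ker_eq_bot, LinearMap.ker_eq_bot']
    exact fun v hv => hf v fun i hi => congrFun hv ⟨i, hi⟩
  simpa [Fintype.card_subtype] using LinearMap.finrank_le_finrank_of_injective hg

theorem finrank_le_card_filter_eigenvalues_pos {E : Type*} [AddCommGroup E] [Module ℝ E]
    [FiniteDimensional ℝ E] (f : E →ₗ[ℝ] N → ℝ) (hf : ∀ v ≠ 0, 0 < f v ⬝ᵥ A *ᵥ f v) :
    Module.finrank ℝ E ≤ #{i | 0 < hA.eigenvalues i} := by
  refine hA.finrank_le_card_filter_eigenvalues (0 < ·) f fun v hv => ?_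
  by_contra hv0
  refine (hf v hv0).not_ge ?_
  rw [hA.dotProduct_mulVec_eq_sum_eigenvalues]
  refine Finset.sum_nonpos fun i _ => ?_
  by_cases hi : 0 < hA.eigenvalues i
  · simp [hv i hi]
  · exact mul_nonpos_of_nonpos_of_nonneg (not_lt.mp hi) (sq_nonneg _)

theorem finrank_le_card_filter_eigenvalues_neg {E : Type*} [AddCommGroup E] [Module ℝ E]
    [FiniteDimensional ℝ E] (f : E →ₗ[ℝ] N → ℝ) (hf : ∀ v ≠ 0, f v ⬝ᵥ A *ᵥ f v < 0) :
    Module.finrank ℝ E ≤ #{i | hA.eigenvalues i < 0} := by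
  refine hA.finrank_le_card_filter_eigenvalues (· < 0) f fun v hv => ?_
  by_contra hv0
  refine (hf v hv0).not_ge ?_
  rw [hA.dotProduct_mulVec_eq_sum_eigenvalues]
  refine Finset.sum_nonneg fun i _ => ?_
  by_cases hi : hA.eigenvalues i < 0
  · simp [hv i hi]
  · exact mul_nonneg (not_lt.mp hi) (sq_nonneg _)

theorem card_filter_eigenvalues_pos_add_neg_le :
    #{i | 0 < hA.eigenvalues i} + #{i | hA.eigenvalues i < 0} ≤ Fintype.card N := by
  have hneg : #{i | hA.eigenvalues i < 0} ≤ #{i | ¬0 < hA.eigenvalues i} :=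
    card_le_card fun i hi => by
      simp only [mem_filter, mem_univ, true_and, not_lt] at hi ⊢
      exact hi.le
  calc _ ≤ #{i | 0 < hA.eigenvalues i} + #{i | ¬0 < hA.eigenvalues i} := by omega
    _ = Fintype.card N := card_filter_add_card_filter_not _

end Matrix.IsHermitian

theorem saddle_point_indefinite_general {n m : ℕ} (hm : 1 ≤ m)
    (H : Matrix (Fin n) (Fin n) ℝ) (B : Matrix (Fin n) (Fin m) ℝ)
    (C : Matrix (Fin m) (Fin m) ℝ)
    (hH : H.PosDef)
    (hB : B.rank = m)
    (hC : C.PosSemidef)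
    (hK : (Matrix.fromBlocks H B Bᵀ (-C)).IsHermitian) :
    (∃ x : Fin n ⊕ Fin m → ℝ,
        0 < x ⬝ᵥ (Matrix.fromBlocks H B Bᵀ (-C)) *ᵥ x) ∧
    (∃ y : Fin n ⊕ Fin m → ℝ,
        y ⬝ᵥ (Matrix.fromBlocks H B Bᵀ (-C)) *ᵥ y < 0) ∧
    (Finset.univ.filter fun i => 0 < hK.eigenvalues i).card = n ∧
    (Finset.univ.filter fun i => hK.eigenvalues i < 0).card = m := by
  have hBinj : Function.Injective B.mulVec :=
    mulVec_injective_of_rank_eq_card (by rwa [Fintype.card_fin])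
  let P : Matrix (Fin n ⊕ Fin m) (Fin n) ℝ := fromRows 1 0
  let Q : Matrix (Fin n ⊕ Fin m) (Fin m) ℝ := fromRows (-(H⁻¹ * B)) 1
  have hpos : ∀ x ≠ 0, 0 < (P *ᵥ x) ⬝ᵥ fromBlocks H B Bᵀ (-C) *ᵥ (P *ᵥ x) :=
    fun _ => dotProduct_fromBlocks_mulVec_pos_of_posDef B C hH
  have hneg : ∀ y ≠ 0, (Q *ᵥ y) ⬝ᵥ fromBlocks H B Bᵀ (-C) *ᵥ (Q *ᵥ y) < 0 :=
    fun _ => dotProduct_fromBlocks_mulVec_neg_of_posDef B C hH hBinj hC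
  have hp := hK.finrank_le_card_filter_eigenvalues_pos P.mulVecLin hpos
  have hq := hK.finrank_le_card_filter_eigenvalues_neg Q.mulVecLin hneg
  have htot := hK.card_filter_eigenvalues_pos_add_neg_le
  have : NeZero m := ⟨by omega⟩
  have : NeZero n := ⟨by have := hB ▸ B.rank_le_height; omega⟩
  simp only [Module.finrank_fin_fun, Fintype.card_sum, Fintype.card_fin] at hp hq htot
  exact ⟨⟨_, hpos 1 one_ne_zero⟩, ⟨_, hneg 1 one_ne_zero⟩, by omega, by omega⟩

/-- The saddle-point matrix `K = [[H, B], [Bᵀ, -C]]` with `H` symmetric positive definite,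
`B` of full column rank and `C` symmetric positive semidefinite is indefinite: there are
vectors `x`, `y` with `xᵀKx > 0` and `yᵀKy < 0`, and it has exactly `n` positive and `m`
negative eigenvalues. -/
theorem saddle_point_indefinite {n m : ℕ} (hm : 1 ≤ m)
    (H : Matrix (Fin n) (Fin n) ℝ) (B : Matrix (Fin n) (Fin m) ℝ)
    (C : Matrix (Fin m) (Fin m) ℝ)
    (hH : H.PosDef) (hHsymm : Hᵀ = H)
    (hB : B.rank = m)
    (hC : C.PosSemidef) (hCsymm : Cᵀ = C)
    (hK : (Matrix.fromBlocks H B Bᵀ (-C)).IsHermitian) :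
    (∃ x : Fin n ⊕ Fin m → ℝ,
        0 < x ⬝ᵥ (Matrix.fromBlocks H B Bᵀ (-C)) *ᵥ x) ∧
    (∃ y : Fin n ⊕ Fin m → ℝ,
        y ⬝ᵥ (Matrix.fromBlocks H B Bᵀ (-C)) *ᵥ y < 0) ∧
    (Finset.univ.filter fun i => 0 < hK.eigenvalues i).card = n ∧
    (Finset.univ.filter fun i => hK.eigenvalues i < 0).card = m :=
  saddle_point_indefinite_general hm H B C hH hB hC hK
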